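/- arXiv:2604.02349 — 5 statements merged into one kernel-verified Lean document; each statement's English description precedes it below -/
import Mathlib

section
/- Let Π and 𝓡 be nonempty finite sets, let V : Π → 𝓡 → ℝ and v̂ : Π → 𝓡 → ℝ be arbitrary functions, let S ⊆ Π and C ⊆ 𝓡 be nonempty subsets, and fix π⋆ ∈ S, R⋆ ∈ C, π̃ ∈ S, R̃ ∈ C. Assume (i) v̂ π̃ R⋆ ≤ V π̃ R⋆ (pessimism of the estimate at the true return function), and (ii) v̂ π R̃ ≤ v̂ π̃ R̃ for every π ∈ Π (π̃ maximizes the pessimistic value under R̃). Then V π⋆ R⋆ − V π̃ R⋆ ≤ (V π⋆ R⋆ − v̂ π⋆ R⋆) + max_{π₁, π₂ ∈ S} max_{R₁, R₂ ∈ C} ( (v̂ π₁ R₁ − v̂ π₁ R₂) + (v̂ π₂ R₂ − v̂ π₂ R₁) ). -/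
/-- Suboptimality decomposition for the pessimistically-optimal policy: the suboptimality of
`πt` under the true return function `Rs` is bounded by the offline estimation error at `πs`
plus the maximal in-confidence-set pessimistic-value disagreement over pairs of candidate
policies in `S` and return functions in `C`. -/
theorem subopt_decomposition {Pol Ret : Type*} [Fintype Pol] [Fintype Ret]
    [Nonempty Pol] [Nonempty Ret]
    (V vhat : Pol → Ret → ℝ) (S : Finset Pol) (C : Finset Ret)
    (hS : S.Nonempty) (hC : C.Nonempty)
    (πs πt : Pol) (Rs Rt : Ret)
    (hπs : πs ∈ S) (hRs : Rs ∈ C) (hπt : πt ∈ S) (hRt : Rt ∈ C)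
    (hpess : vhat πt Rs ≤ V πt Rs)
    (hopt : ∀ π : Pol, vhat π Rt ≤ vhat πt Rt) :
    V πs Rs - V πt Rs ≤ (V πs Rs - vhat πs Rs) +
      S.sup' hS (fun π₁ => S.sup' hS (fun π₂ => C.sup' hC (fun R₁ => C.sup' hC (fun R₂ =>
        (vhat π₁ R₁ - vhat π₁ R₂) + (vhat π₂ R₂ - vhat π₂ R₁))))) := by
  have h1 : (vhat πs Rs - vhat πs Rt) + (vhat πt Rt - vhat πt Rs) ≤
      S.sup' hS (fun π₁ => S.sup' hS (fun π₂ => C.sup' hC (fun R₁ => C.sup' hC (fun R₂ =>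
        (vhat π₁ R₁ - vhat π₁ R₂) + (vhat π₂ R₂ - vhat π₂ R₁))))) := by
    have a1 := Finset.le_sup' (fun R₂ => (vhat πs Rs - vhat πs R₂) + (vhat πt R₂ - vhat πt Rs)) hRt
    have a2 := Finset.le_sup' (fun R₁ => C.sup' hC (fun R₂ => (vhat πs R₁ - vhat πs R₂) + (vhat πt R₂ - vhat πt R₁))) hRs
    have a3 := Finset.le_sup' (fun π₂ => C.sup' hC (fun R₁ => C.sup' hC (fun R₂ => (vhat πs R₁ - vhat πs R₂) + (vhat π₂ R₂ - vhat π₂ R₁)))) hπt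
    have a4 := Finset.le_sup' (fun π₁ => S.sup' hS (fun π₂ => C.sup' hC (fun R₁ => C.sup' hC (fun R₂ => (vhat π₁ R₁ - vhat π₁ R₂) + (vhat π₂ R₂ - vhat π₂ R₁))))) hπs
    exact le_trans a1 (le_trans a2 (le_trans a3 a4))
  have h2 := hopt πs
  linarith
end

section
/- Let Π and 𝓡 be nonempty finite sets, let V : Π → 𝓡 → ℝ and v̂ : Π → 𝓡 → ℝ be arbitrary functions, let S ⊆ Π and C ⊆ 𝓡 be nonempty subsets, and fix π⋆ ∈ S, R⋆ ∈ C, π̃ ∈ S, R̃ ∈ C. Assume (i) v̂ π̃ R⋆ ≤ V π̃ R⋆, (ii) v̂ π R̃ ≤ v̂ π̃ R̃ for every π ∈ Π, and (iii) there is ε ≥ 0 such that |V π R − v̂ π R| ≤ ε for every π ∈ S and R ∈ C. Then V π⋆ R⋆ − V π̃ R⋆ ≤ 5ε + max_{π₁, π₂ ∈ S} max_{R₁, R₂ ∈ C} ( (V π₁ R₁ − V π₁ R₂) + (V π₂ R₂ − V π₂ R₁) ). -/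
/-- Suboptimality decomposition with a uniform estimation error: if the pessimistic value
estimate `vhat` is uniformly `ε`-accurate on candidate policies `S` and the confidence set `C`,
then the suboptimality of the pessimistically-optimal policy `πt` is at most `5ε` plus the
maximal in-confidence-set disagreement of true values over pairs of candidate policies. -/
theorem subopt_decompose_uniform_error {Pol Ret : Type*} [Fintype Pol] [Fintype Ret]
    [Nonempty Pol] [Nonempty Ret]
    (V vhat : Pol → Ret → ℝ) (S : Finset Pol) (C : Finset Ret)
    (hS : S.Nonempty) (hC : C.Nonempty)
    (πs πt : Pol) (Rs Rt : Ret)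
    (hπs : πs ∈ S) (hRs : Rs ∈ C) (hπt : πt ∈ S) (hRt : Rt ∈ C)
    (hpess : vhat πt Rs ≤ V πt Rs)
    (hopt : ∀ π : Pol, vhat π Rt ≤ vhat πt Rt)
    (ε : ℝ) (hε : 0 ≤ ε)
    (herr : ∀ π ∈ S, ∀ R ∈ C, |V π R - vhat π R| ≤ ε) :
    V πs Rs - V πt Rs ≤ 5 * ε +
      S.sup' hS (fun π₁ => S.sup' hS (fun π₂ => C.sup' hC (fun R₁ => C.sup' hC (fun R₂ =>
        (V π₁ R₁ - V π₁ R₂) + (V π₂ R₂ - V π₂ R₁))))) := by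
  have hM : (V πs Rs - V πs Rt) + (V πt Rt - V πt Rs) ≤
      S.sup' hS (fun π₁ => S.sup' hS (fun π₂ => C.sup' hC (fun R₁ => C.sup' hC (fun R₂ =>
        (V π₁ R₁ - V π₁ R₂) + (V π₂ R₂ - V π₂ R₁))))) := by
    calc (V πs Rs - V πs Rt) + (V πt Rt - V πt Rs)
        ≤ C.sup' hC (fun R₂ => (V πs Rs - V πs R₂) + (V πt R₂ - V πt Rs)) :=
          Finset.le_sup' (fun R₂ => (V πs Rs - V πs R₂) + (V πt R₂ - V πt Rs)) hRt
      _ ≤ C.sup' hC (fun R₁ => C.sup' hC (fun R₂ =>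
            (V πs R₁ - V πs R₂) + (V πt R₂ - V πt R₁))) :=
            Finset.le_sup' (fun R₁ => C.sup' hC (fun R₂ =>
              (V πs R₁ - V πs R₂) + (V πt R₂ - V πt R₁))) hRs
      _ ≤ S.sup' hS (fun π₂ => C.sup' hC (fun R₁ => C.sup' hC (fun R₂ =>
            (V πs R₁ - V πs R₂) + (V π₂ R₂ - V π₂ R₁)))) :=
            Finset.le_sup' (fun π₂ => C.sup' hC (fun R₁ => C.sup' hC (fun R₂ =>
              (V πs R₁ - V πs R₂) + (V π₂ R₂ - V π₂ R₁)))) hπt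
      _ ≤ _ := Finset.le_sup' (fun π₁ => S.sup' hS (fun π₂ => C.sup' hC (fun R₁ =>
            C.sup' hC (fun R₂ => (V π₁ R₁ - V π₁ R₂) + (V π₂ R₂ - V π₂ R₁))))) hπs
  have h1 := abs_le.mp (herr πs hπs Rt hRt)
  have h2 := abs_le.mp (herr πt hπt Rt hRt)
  have h3 := hopt πs
  nlinarith [hM, h1.1, h1.2, h2.1, h2.2]
end

section
/- Let X be a measurable space and κ a Markov kernel from X to X. Fix H ∈ ℕ and probability measures μ_0, μ_1, …, μ_{H−1} on X satisfying μ_{h+1} = μ_h.bind κ for every 0 ≤ h < H−1. Let r : X → ℝ and q_0, q_1, …, q_H : X → ℝ be bounded measurable functions with q_H = 0. Then | ∫ q_0 dμ_0 − ∑_{h=0}^{H−1} ∫ r dμ_h | ≤ ∑_{h=0}^{H−1} ( ∫ ( q_h(x) − r(x) − ∫ q_{h+1}(y) d(κ x)(y) )² dμ_h(x) )^{1/2}. -/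
/-!
Integrating the Bellman residual of step `h` against `μ h`, and using `μ (h + 1) = κ ∘ₘ μ h` to
turn the integral of `∫ q (h + 1) d(κ x)` into `∫ q (h + 1) dμ (h + 1)`, gives
`∫ q h dμ h - ∫ r dμ h - ∫ q (h + 1) dμ (h + 1)`. Summing over `h` telescopes, since `q H = 0`,
to the value error. Each summand is then bounded by the `L²` norm of the residual, because
`(∫ g dμ)² ≤ ∫ g² dμ` for a probability measure (the variance is nonnegative).
-/

open MeasureTheory ProbabilityTheory Finset
open scoped ENNReal

theorem Finset.sum_range_sub_sub_succ {M : Type*} [AddCommGroup M] (f g : ℕ → M) (n : ℕ) :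
    ∑ i ∈ range n, (f i - g i - f (i + 1)) = f 0 - f n - ∑ i ∈ range n, g i := by
  rw [← sum_range_sub' f n, ← sum_sub_distrib]
  exact sum_congr rfl fun i _ => sub_right_comm _ _ _

section

variable {α β : Type*} [MeasurableSpace α] [MeasurableSpace β] {μ : Measure α}

theorem abs_integral_le_sqrt_integral_sq [IsProbabilityMeasure μ] {g : α → ℝ}
    (hg : MemLp g 2 μ) : |∫ x, g x ∂μ| ≤ √(∫ x, g x ^ 2 ∂μ) := by
  refine Real.abs_le_sqrt ?_
  have hvar := variance_nonneg g μ
  rw [variance_eq_sub hg] at hvar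
  simpa [Pi.pow_apply] using hvar

theorem MeasureTheory.Measure.integral_comp {E : Type*} [NormedAddCommGroup E] [NormedSpace ℝ E]
    [SFinite μ] {κ : Kernel α β} [IsSFiniteKernel κ] {f : β → E} (hf : Integrable f (κ ∘ₘ μ)) :
    ∫ y, f y ∂(κ ∘ₘ μ) = ∫ x, ∫ y, f y ∂(κ x) ∂μ := by
  rw [← Measure.snd_compProd, Measure.snd,
    integral_map measurable_snd.aemeasurable
      (by rw [← Measure.snd, Measure.snd_compProd]; exact hf.1),
    Measure.integral_compProd ((Measure.integrable_compProd_snd_iff hf.1).2 hf)]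

theorem ProbabilityTheory.memLp_top_integral_kernel {κ : Kernel α β} [IsMarkovKernel κ]
    {v : β → ℝ} (hv : Measurable v) {M : ℝ} (hM : ∀ y, |v y| ≤ M) :
    MemLp (fun x => ∫ y, v y ∂(κ x)) ∞ μ := by
  refine memLp_top_of_bound hv.stronglyMeasurable.integral_kernel.aestronglyMeasurable M
    (ae_of_all _ fun x => ?_)
  simpa using norm_integral_le_of_norm_le_const (μ := κ x) (f := v) (ae_of_all _ hM)

theorem ProbabilityTheory.integral_sub_sub_integral_kernel [IsFiniteMeasure μ] {κ : Kernel α β}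
    [IsMarkovKernel κ]
    {f g : α → ℝ} {v : β → ℝ} (hf : Integrable f μ) (hg : Integrable g μ) (hv : Measurable v)
    {M : ℝ} (hM : ∀ y, |v y| ≤ M) :
    ∫ x, (f x - g x - ∫ y, v y ∂(κ x)) ∂μ = ∫ x, f x ∂μ - ∫ x, g x ∂μ - ∫ y, v y ∂(κ ∘ₘ μ) := by
  have hv_int : Integrable v (κ ∘ₘ μ) :=
    (memLp_top_of_bound hv.aestronglyMeasurable M (ae_of_all _ hM)).integrable le_top
  rw [integral_sub (f := fun x => f x - g x) (hf.sub hg)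
      ((memLp_top_integral_kernel hv hM).integrable le_top), integral_sub hf hg,
    Measure.integral_comp hv_int]

end

/-- The value-evaluation error of a candidate value function is bounded by the sum over steps
of the `L²(μ h)`-norms of its Bellman residuals: telescoping value-difference identity combined
with Jensen's (Cauchy–Schwarz) inequality for the probability measures `μ h`. -/
theorem value_error_le_sum_bellman_residual_L2 {X : Type*} [MeasurableSpace X]
    (κ : ProbabilityTheory.Kernel X X) [IsMarkovKernel κ]
    (H : ℕ) (μ : ℕ → Measure X)
    (hprob : ∀ h < H, IsProbabilityMeasure (μ h))
    (hstep : ∀ h, h + 1 < H → μ (h + 1) = (μ h).bind (fun x => κ x))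
    (r : X → ℝ) (hr : Measurable r) (hrb : ∃ M : ℝ, ∀ x, |r x| ≤ M)
    (q : ℕ → X → ℝ) (hq : ∀ h ≤ H, Measurable (q h))
    (hqb : ∀ h ≤ H, ∃ M : ℝ, ∀ x, |q h x| ≤ M)
    (hqH : q H = 0) :
    |(∫ x, q 0 x ∂(μ 0)) - ∑ h ∈ Finset.range H, ∫ x, r x ∂(μ h)| ≤
      ∑ h ∈ Finset.range H,
        Real.sqrt (∫ x, (q h x - r x - ∫ y, q (h + 1) y ∂(κ x)) ^ 2 ∂(μ h)) := by
  obtain ⟨Mr, hMr⟩ := hrb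
  choose! Mq hMq using hqb
  have hr_top (ν : Measure X) : MemLp r ∞ ν :=
    memLp_top_of_bound hr.aestronglyMeasurable Mr (ae_of_all _ hMr)
  have hq_top (ν : Measure X) {h : ℕ} (hh : h ≤ H) : MemLp (q h) ∞ ν :=
    memLp_top_of_bound (hq h hh).aestronglyMeasurable (Mq h) (ae_of_all _ (hMq h hh))
  -- `μ H` is unconstrained: at the last step both sides vanish because `q H = 0`.
  have hnext : ∀ h < H, ∫ y, q (h + 1) y ∂(κ ∘ₘ μ h) = ∫ y, q (h + 1) y ∂(μ (h + 1)) := by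
    intro h hh
    rcases (show h + 1 ≤ H from hh).lt_or_eq with hlt | heq
    · rw [hstep h hlt]
    · simp [heq, hqH]
  have hresidual : ∀ h ∈ range H, ∫ x, (q h x - r x - ∫ y, q (h + 1) y ∂(κ x)) ∂(μ h) =
      ∫ x, q h x ∂(μ h) - ∫ x, r x ∂(μ h) - ∫ x, q (h + 1) x ∂(μ (h + 1)) := by
    intro h hh
    have hh := mem_range.mp hh
    have := hprob h hh
    rw [integral_sub_sub_integral_kernel ((hq_top _ hh.le).integrable le_top)
      ((hr_top _).integrable le_top) (hq _ hh) (hMq _ hh), hnext h hh]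
  have hjensen : ∀ h ∈ range H, |∫ x, (q h x - r x - ∫ y, q (h + 1) y ∂(κ x)) ∂(μ h)| ≤
      √(∫ x, (q h x - r x - ∫ y, q (h + 1) y ∂(κ x)) ^ 2 ∂(μ h)) := by
    intro h hh
    have hh := mem_range.mp hh
    have := hprob h hh
    exact abs_integral_le_sqrt_integral_sq <| (((hq_top _ hh.le).sub (hr_top _)).sub
      (memLp_top_integral_kernel (hq _ hh) (hMq _ hh))).mono_exponent le_top
  calc |(∫ x, q 0 x ∂(μ 0)) - ∑ h ∈ range H, ∫ x, r x ∂(μ h)|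
      = |∑ h ∈ range H, ∫ x, (q h x - r x - ∫ y, q (h + 1) y ∂(κ x)) ∂(μ h)| := by
        rw [sum_congr rfl hresidual, sum_range_sub_sub_succ, hqH]
        simp
    _ ≤ ∑ h ∈ range H, |∫ x, (q h x - r x - ∫ y, q (h + 1) y ∂(κ x)) ∂(μ h)| :=
        abs_sum_le_sum_abs _ _
    _ ≤ _ := sum_le_sum hjensen
end

section
/- Let X be a measurable space and κ a Markov kernel from X to X. Fix H ∈ ℕ and probability measures μ_0, μ_1, …, μ_{H−1} on X satisfying μ_{h+1} = μ_h.bind κ for every 0 ≤ h < H−1. Let r : X → ℝ and q_0, q_1, …, q_H : X → ℝ be bounded measurable functions with q_H = 0. Suppose moreover that ν is a probability measure on X and Cs ≥ 0 is such that for each 0 ≤ h < H there is a measurable ρ_h : X → [0,∞] with μ_h = ν.withDensity ρ_h and ρ_h ≤ Cs ν-almost everywhere, and suppose ε_b ≥ 0 satisfies ( ∫ ( q_h(x) − r(x) − ∫ q_{h+1}(y) d(κ x)(y) )² dν(x) )^{1/2} ≤ ε_b for every 0 ≤ h < H. Then | ∫ q_0 dμ_0 − ∑_{h=0}^{H−1}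 ∫ r dμ_h | ≤ H · √Cs · ε_b. -/
/-!
Summing the Bellman residuals against the occupancies telescopes: the step-`h` residual
integrates under `μ h` to `∫ q h ∂μ h - ∫ r ∂μ h - ∫ q (h + 1) ∂μ (h + 1)`, because
`μ (h + 1) = μ h` pushed through `κ`, and the last term vanishes at `h + 1 = H` since `q H = 0`.
Each summand is then bounded by Jensen, `|∫ f ∂μ h| ≤ ‖f‖_{L²(μ h)}`, followed by the change of
measure `μ h ≤ Cs • ν`, which gives `‖f‖_{L²(μ h)} ≤ √Cs ‖f‖_{L²(ν)} ≤ √Cs εb`.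
-/

open MeasureTheory ProbabilityTheory ENNReal

section

variable {α β : Type*} [MeasurableSpace α] [MeasurableSpace β]

def BddMeasurable (f : α → ℝ) : Prop :=
  Measurable f ∧ ∃ M : ℝ, ∀ x, |f x| ≤ M

namespace BddMeasurable

variable {f g : α → ℝ}

lemma sub (hf : BddMeasurable f) (hg : BddMeasurable g) : BddMeasurable (f - g) := by
  obtain ⟨hfm, Mf, hMf⟩ := hf
  obtain ⟨hgm, Mg, hMg⟩ := hg
  exact ⟨hfm.sub hgm, Mf + Mg, fun x => (abs_sub _ _).trans (add_le_add (hMf x) (hMg x))⟩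

lemma integral_kernel {f : β → ℝ} (hf : BddMeasurable f) (κ : Kernel α β) [IsMarkovKernel κ] :
    BddMeasurable fun x => ∫ y, f y ∂κ x := by
  obtain ⟨hfm, M, hM⟩ := hf
  refine ⟨hfm.stronglyMeasurable.integral_kernel.measurable, M, fun x => ?_⟩
  simpa using norm_integral_le_of_norm_le_const (μ := κ x) (f := f) (ae_of_all _ hM)

lemma memLp (hf : BddMeasurable f) (p : ℝ≥0∞) (μ : Measure α) [IsFiniteMeasure μ] :
    MemLp f p μ := by
  obtain ⟨hfm, M, hM⟩ := hf
  exact MemLp.of_bound hfm.aestronglyMeasurable M (ae_of_all _ hM)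

lemma integrable (hf : BddMeasurable f) (μ : Measure α) [IsFiniteMeasure μ] : Integrable f μ :=
  memLp_one_iff_integrable.1 (hf.memLp 1 μ)

end BddMeasurable

noncomputable def bellmanResidual (κ : Kernel α β) (r v : α → ℝ) (w : β → ℝ) (x : α) : ℝ :=
  v x - r x - ∫ y, w y ∂κ x

namespace MeasureTheory

lemma Measure.integral_bind_kernel {E : Type*} [NormedAddCommGroup E] [NormedSpace ℝ E]
    {μ : Measure α} {κ : Kernel α β} {f : β → E} (hf : Integrable f (μ.bind κ)) :
    ∫ y, f y ∂(μ.bind κ) = ∫ x, ∫ y, f y ∂κ x ∂μ := by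
  rw [Measure.comp_eq_comp_const_apply] at hf ⊢
  exact Kernel.integral_comp hf

lemma sq_integral_le_integral_sq {μ : Measure α} [IsProbabilityMeasure μ] {f : α → ℝ}
    (hf : MemLp f 2 μ) : (∫ x, f x ∂μ) ^ 2 ≤ ∫ x, f x ^ 2 ∂μ := by
  have hvar := variance_nonneg f μ
  rw [variance_eq_sub hf] at hvar
  simpa [sub_nonneg] using hvar

lemma withDensity_le_smul_of_ae_le {ν : Measure α} {ρ : α → ℝ≥0∞} {c : ℝ≥0∞}
    (hρ : ∀ᵐ x ∂ν, ρ x ≤ c) : ν.withDensity ρ ≤ c • ν :=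
  (withDensity_mono hρ).trans_eq (withDensity_const c)

lemma integral_le_mul_integral_of_le_smul {μ ν : Measure α} {C : ℝ} (hC : 0 ≤ C)
    (hμν : μ ≤ ENNReal.ofReal C • ν) {g : α → ℝ} (hg : 0 ≤ᵐ[ν] g) (hgi : Integrable g ν) :
    ∫ x, g x ∂μ ≤ C * ∫ x, g x ∂ν := by
  have hgc : 0 ≤ᵐ[ENNReal.ofReal C • ν] g := Measure.ae_smul_measure hg _
  calc ∫ x, g x ∂μ ≤ ∫ x, g x ∂(ENNReal.ofReal C • ν) :=
        integral_mono_measure hμν hgc (hgi.smul_measure ofReal_ne_top)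
    _ = C * ∫ x, g x ∂ν := by rw [integral_smul_measure, toReal_ofReal hC, smul_eq_mul]

lemma abs_integral_le_sqrt_mul_sqrt_integral_sq {μ ν : Measure α} [IsProbabilityMeasure μ]
    {C : ℝ} (hC : 0 ≤ C) (hμν : μ ≤ ENNReal.ofReal C • ν) {f : α → ℝ} (hf : MemLp f 2 ν) :
    |∫ x, f x ∂μ| ≤ √C * √(∫ x, f x ^ 2 ∂ν) := by
  have hfμ : MemLp f 2 μ := hf.of_measure_le_smul ofReal_ne_top hμν
  calc |∫ x, f x ∂μ| = √((∫ x, f x ∂μ) ^ 2) := (Real.sqrt_sq_eq_abs _).symm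
    _ ≤ √(∫ x, f x ^ 2 ∂μ) := Real.sqrt_le_sqrt (sq_integral_le_integral_sq hfμ)
    _ ≤ √(C * ∫ x, f x ^ 2 ∂ν) := Real.sqrt_le_sqrt <|
        integral_le_mul_integral_of_le_smul hC hμν (ae_of_all _ fun x => sq_nonneg (f x))
          hf.integrable_sq
    _ = √C * √(∫ x, f x ^ 2 ∂ν) := Real.sqrt_mul hC _

end MeasureTheory

lemma integral_bellmanResidual {μ : Measure α} [IsFiniteMeasure μ] (κ : Kernel α β)
    [IsMarkovKernel κ] {r v : α → ℝ} {w : β → ℝ} (hr : BddMeasurable r) (hv : BddMeasurable v)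
    (hw : BddMeasurable w) :
    ∫ x, bellmanResidual κ r v w x ∂μ = ∫ x, v x ∂μ - ∫ x, r x ∂μ - ∫ y, w y ∂(μ.bind κ) := by
  rw [Measure.integral_bind_kernel (hw.integrable _)]
  unfold bellmanResidual
  rw [integral_sub (f := fun x => v x - r x) ((hv.integrable μ).sub (hr.integrable μ)) ((hw.integral_kernel κ).integrable μ),
    integral_sub (hv.integrable μ) (hr.integrable μ)]
end

theorem value_error_le_coverage_bellman_general {X : Type*} [MeasurableSpace X]
    (κ : ProbabilityTheory.Kernel X X) [IsMarkovKernel κ]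
    (H : ℕ) (μ : ℕ → Measure X)
    (hprob : ∀ h < H, IsProbabilityMeasure (μ h))
    (hstep : ∀ h, h + 1 < H → μ (h + 1) = (μ h).bind (fun x => κ x))
    (r : X → ℝ) (hr : Measurable r) (hrb : ∃ M : ℝ, ∀ x, |r x| ≤ M)
    (q : ℕ → X → ℝ) (hq : ∀ h ≤ H, Measurable (q h))
    (hqb : ∀ h ≤ H, ∃ M : ℝ, ∀ x, |q h x| ≤ M)
    (hqH : q H = 0)
    (ν : Measure X) (hν : IsProbabilityMeasure ν)
    (Cs : ℝ) (hCs : 0 ≤ Cs)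
    (hdens : ∀ h < H, ∃ ρ : X → ℝ≥0∞, Measurable ρ ∧
      μ h = ν.withDensity ρ ∧ ∀ᵐ x ∂ν, ρ x ≤ ENNReal.ofReal Cs)
    (εb : ℝ)
    (hres : ∀ h < H,
      Real.sqrt (∫ x, (q h x - r x - ∫ y, q (h + 1) y ∂(κ x)) ^ 2 ∂ν) ≤ εb) :
    |(∫ x, q 0 x ∂(μ 0)) - ∑ h ∈ Finset.range H, ∫ x, r x ∂(μ h)| ≤
      (H : ℝ) * Real.sqrt Cs * εb := by
  have hrB : BddMeasurable r := ⟨hr, hrb⟩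
  have hqB : ∀ h ≤ H, BddMeasurable (q h) := fun h hh => ⟨hq h hh, hqb h hh⟩
  have hnext : ∀ h < H, ∫ x, q (h + 1) x ∂(μ (h + 1)) = ∫ x, q (h + 1) x ∂((μ h).bind κ) := by
    intro h hh
    rcases (Nat.succ_le_of_lt hh).lt_or_eq with hlt | rfl
    · rw [hstep h hlt]
    · simp [hqH]
  have hsplit : ∀ h < H, ∫ x, bellmanResidual κ r (q h) (q (h + 1)) x ∂(μ h) =
      (∫ x, q h x ∂(μ h)) - ∫ x, q (h + 1) x ∂(μ (h + 1)) - ∫ x, r x ∂(μ h) := by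
    intro h hh
    have := hprob h hh
    rw [integral_bellmanResidual κ hrB (hqB h hh.le) (hqB (h + 1) hh), hnext h hh]
    ring
  have hbound : ∀ h < H, |∫ x, bellmanResidual κ r (q h) (q (h + 1)) x ∂(μ h)| ≤ √Cs * εb := by
    intro h hh
    have := hprob h hh
    obtain ⟨ρ, -, hμρ, hρ⟩ := hdens h hh
    have hμν : μ h ≤ ENNReal.ofReal Cs • ν := hμρ ▸ withDensity_le_smul_of_ae_le hρ
    have hL2 := (((hqB h hh.le).sub hrB).sub ((hqB (h + 1) hh).integral_kernel κ)).memLp 2 ν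
    exact (abs_integral_le_sqrt_mul_sqrt_integral_sq hCs hμν hL2).trans
      (mul_le_mul_of_nonneg_left (hres h hh) (Real.sqrt_nonneg Cs))
  calc |(∫ x, q 0 x ∂(μ 0)) - ∑ h ∈ Finset.range H, ∫ x, r x ∂(μ h)|
      = |∑ h ∈ Finset.range H, ∫ x, bellmanResidual κ r (q h) (q (h + 1)) x ∂(μ h)| := by
        rw [Finset.sum_congr rfl fun h hh => hsplit h (Finset.mem_range.1 hh),
          Finset.sum_sub_distrib, Finset.sum_range_sub' (fun h => ∫ x, q h x ∂(μ h)), hqH]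
        simp
    _ ≤ ∑ h ∈ Finset.range H, |∫ x, bellmanResidual κ r (q h) (q (h + 1)) x ∂(μ h)| :=
        Finset.abs_sum_le_sum_abs _ _
    _ ≤ ∑ _h ∈ Finset.range H, √Cs * εb :=
        Finset.sum_le_sum fun h hh => hbound h (Finset.mem_range.1 hh)
    _ = (H : ℝ) * Real.sqrt Cs * εb := by simp [mul_assoc]

/-- Bellman-consistent pessimism bound: if every occupancy measure `μ h` has density at most
`Cs` with respect to the data distribution `ν`, and every Bellman residual has `L²(ν)`-norm at
most `εb`, then the value-evaluation error of the candidate value function is at most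
`H · √Cs · εb`. -/
theorem value_error_le_coverage_bellman {X : Type*} [MeasurableSpace X]
    (κ : ProbabilityTheory.Kernel X X) [IsMarkovKernel κ]
    (H : ℕ) (μ : ℕ → Measure X)
    (hprob : ∀ h < H, IsProbabilityMeasure (μ h))
    (hstep : ∀ h, h + 1 < H → μ (h + 1) = (μ h).bind (fun x => κ x))
    (r : X → ℝ) (hr : Measurable r) (hrb : ∃ M : ℝ, ∀ x, |r x| ≤ M)
    (q : ℕ → X → ℝ) (hq : ∀ h ≤ H, Measurable (q h))
    (hqb : ∀ h ≤ H, ∃ M : ℝ, ∀ x, |q h x| ≤ M)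
    (hqH : q H = 0)
    (ν : Measure X) (hν : IsProbabilityMeasure ν)
    (Cs : ℝ) (hCs : 0 ≤ Cs)
    (hdens : ∀ h < H, ∃ ρ : X → ℝ≥0∞, Measurable ρ ∧
      μ h = ν.withDensity ρ ∧ ∀ᵐ x ∂ν, ρ x ≤ ENNReal.ofReal Cs)
    (εb : ℝ) (hεb : 0 ≤ εb)
    (hres : ∀ h < H,
      Real.sqrt (∫ x, (q h x - r x - ∫ y, q (h + 1) y ∂(κ x)) ^ 2 ∂ν) ≤ εb) :
    |(∫ x, q 0 x ∂(μ 0)) - ∑ h ∈ Finset.range H, ∫ x, r x ∂(μ h)| ≤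
      (H : ℝ) * Real.sqrt Cs * εb :=
  value_error_le_coverage_bellman_general κ H μ hprob hstep r hr hrb q hq hqb hqH ν hν Cs hCs hdens
    εb hres
end

section
/- Let σ : ℝ → ℝ be the logistic function σ(t) = (1 + exp(−t))⁻¹, let R_max ≥ 0, and set κ = 1 / deriv σ (2 · R_max). Then for every n ∈ ℕ and all sequences u, v : Fin n → ℝ with |u i| ≤ 2 R_max and |v i| ≤ 2 R_max for all i, one has ∑_{i} (u i − v i)² ≤ κ² · ∑_{i} (σ (u i) − σ (v i))². -/
open Real Finset

/-! On `[-M, M]` the logistic function has slope at least `σ'(M)`, since `σ' = 1/4 - (σ - 1/2)²`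
and `|σ x - 1/2|` grows with `|x|`. A lower bound `c > 0` on the derivative of any function along
the segment joining `u i` and `v i` bounds `|u i - v i|` by `|f (u i) - f (v i)| / c`; squaring and
summing gives the inequality with `κ = 1 / σ'(2 R_max)`. -/

theorem Convex.mul_abs_sub_le_abs_image_sub_of_le_deriv {D : Set ℝ} (hD : Convex ℝ D)
    {f : ℝ → ℝ} (hf : Differentiable ℝ f) {C : ℝ} (hC : ∀ x ∈ D, C ≤ deriv f x)
    {x y : ℝ} (hx : x ∈ D) (hy : y ∈ D) : C * |x - y| ≤ |f x - f y| := by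
  have slope := hD.mul_sub_le_image_sub_of_le_deriv hf.continuous.continuousOn
    hf.differentiableOn (fun z hz => hC z (interior_subset hz))
  rcases le_total x y with hxy | hyx
  · rw [abs_sub_comm x, abs_sub_comm (f x), abs_of_nonneg (sub_nonneg.2 hxy)]
    exact (slope x hx y hy hxy).trans (le_abs_self _)
  · rw [abs_of_nonneg (sub_nonneg.2 hyx)]
    exact (slope y hy x hx hyx).trans (le_abs_self _)

theorem Convex.sum_sq_sub_le_of_le_deriv {D : Set ℝ} (hD : Convex ℝ D)
    {f : ℝ → ℝ} (hf : Differentiable ℝ f) {C : ℝ} (hC₀ : 0 < C)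
    (hC : ∀ x ∈ D, C ≤ deriv f x) {ι : Type*} (s : Finset ι) {u v : ι → ℝ}
    (hu : ∀ i, u i ∈ D) (hv : ∀ i, v i ∈ D) :
    ∑ i ∈ s, (u i - v i) ^ 2 ≤ (1 / C) ^ 2 * ∑ i ∈ s, (f (u i) - f (v i)) ^ 2 := by
  rw [mul_sum]
  refine sum_le_sum fun i _ => ?_
  have hslope := hD.mul_abs_sub_le_abs_image_sub_of_le_deriv hf hC (hu i) (hv i)
  have hsq : (C * |u i - v i|) ^ 2 ≤ |f (u i) - f (v i)| ^ 2 :=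
    pow_le_pow_left₀ (by positivity) hslope 2
  calc (u i - v i) ^ 2 = (1 / C) ^ 2 * (C * |u i - v i|) ^ 2 := by
        rw [mul_pow, sq_abs]; field_simp
    _ ≤ (1 / C) ^ 2 * (f (u i) - f (v i)) ^ 2 := by
        rw [← sq_abs (f (u i) - f (v i))]; gcongr

theorem abs_sigmoid_sub_half (x : ℝ) : |sigmoid x - 1 / 2| = sigmoid |x| - 1 / 2 := by
  have sigmoid_zero' : sigmoid 0 = 1 / 2 := by rw [sigmoid_zero, one_div]
  rcases le_total 0 x with hx | hx
  · rw [abs_of_nonneg hx, abs_of_nonneg]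
    rw [sub_nonneg, ← sigmoid_zero']
    exact sigmoid_le hx
  · rw [abs_of_nonpos hx, abs_of_nonpos, sigmoid_neg]
    · ring
    · rw [sub_nonpos, ← sigmoid_zero']
      exact sigmoid_le hx

theorem deriv_sigmoid_eq (x : ℝ) : deriv sigmoid x = 1 / 4 - (sigmoid x - 1 / 2) ^ 2 := by
  rw [deriv_sigmoid]; ring

theorem deriv_sigmoid_pos (x : ℝ) : 0 < deriv sigmoid x := by
  rw [deriv_sigmoid]
  exact mul_pos (sigmoid_pos x) (sub_pos.2 (sigmoid_lt_one x))

theorem deriv_sigmoid_le_of_abs_le {x M : ℝ} (h : |x| ≤ M) :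
    deriv sigmoid M ≤ deriv sigmoid x := by
  have hdist : |sigmoid x - 1 / 2| ≤ sigmoid M - 1 / 2 := by
    rw [abs_sigmoid_sub_half]
    linarith [sigmoid_le h]
  rw [deriv_sigmoid_eq, deriv_sigmoid_eq, sub_le_sub_iff_left, ← sq_abs (sigmoid x - 1 / 2)]
  exact pow_le_pow_left₀ (abs_nonneg _) hdist 2

theorem return_confidence_inverse_bound_general (Rmax : ℝ) :
    let σ : ℝ → ℝ := fun t => (1 + Real.exp (-t))⁻¹
    let κ : ℝ := 1 / deriv σ (2 * Rmax)
    ∀ (n : ℕ) (u v : Fin n → ℝ),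
      (∀ i, |u i| ≤ 2 * Rmax) → (∀ i, |v i| ≤ 2 * Rmax) →
      ∑ i, (u i - v i) ^ 2 ≤ κ ^ 2 * ∑ i, (σ (u i) - σ (v i)) ^ 2 := by
  intro σ κ n u v hu hv
  have hslope : ∀ x ∈ Set.Icc (-(2 * Rmax)) (2 * Rmax),
      deriv sigmoid (2 * Rmax) ≤ deriv sigmoid x :=
    fun x hx => deriv_sigmoid_le_of_abs_le (abs_le.2 hx)
  exact (convex_Icc _ _).sum_sq_sub_le_of_le_deriv differentiable_sigmoid
    (deriv_sigmoid_pos _) hslope univ (fun i => abs_le.1 (hu i)) (fun i => abs_le.1 (hv i))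

/-- Key deterministic inequality of the return confidence-set lemma: for the logistic link
function `σ` of the Bradley–Terry model and `κ = 1 / σ′(2 R_max)`, the cumulative squared
deviation of return differences (all bounded by `2 R_max` in absolute value) is at most `κ²`
times the cumulative squared deviation of the predicted preference probabilities. -/
theorem return_confidence_inverse_bound (Rmax : ℝ) (hR : 0 ≤ Rmax) :
    let σ : ℝ → ℝ := fun t => (1 + Real.exp (-t))⁻¹
    let κ : ℝ := 1 / deriv σ (2 * Rmax)
    ∀ (n : ℕ) (u v : Fin n → ℝ),
      (∀ i, |u i| ≤ 2 * Rmax) → (∀ i, |v i| ≤ 2 * Rmax) →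
      ∑ i, (u i - v i) ^ 2 ≤ κ ^ 2 * ∑ i, (σ (u i) - σ (v i)) ^ 2 :=
  return_confidence_inverse_bound_general Rmax
end
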